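/- Schouten bracket formula: under the hypotheses that R is hereditary, Ω₀ compatible with R, H₀ defined by Ω₀(H₀ξ,y) = ξ(y) with x ↦ i_xΩ₀ bijective, Hₙ = RⁿH₀, Ωₙ = Ω₀∘Rⁿ, one has, for all 1-forms ξ, η, ζ: [Hₘ,Hₙ](ξ,η,ζ) = 4 dΩ_{m+n}(H₀ξ, H₀η, H₀ζ) − { dΩₘ(Hₙξ, H₀η, H₀ζ) + dΩₙ(Hₘξ, H₀η, H₀ζ) + cyclic permutations of (ξ,η,ζ) }. -/

import Mathlib

/-!
Write `a = H₀ξ`, `b = H₀η`, `c = H₀ζ`. Since `Ω (H₀ξ) = ξ` on `X`, compatibility and skew-symmetry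
turn each term `ξ (Rᵐ H₀ (L_{Rⁿ b} ζ))` into `Ω(c, [Rⁿb, Rᵐa]) − (Rⁿb)·Ω(c, Rᵐa)`. Vanishing
Nijenhuis torsion propagates to powers, `[Rⁱx, Rʲy] = Rⁱ[x, Rʲy] + Rʲ[Rⁱx, y] − Rⁱ⁺ʲ[x, y]`, and
`Ω(Rⁱx, Rʲy) = Ω(Rⁱ⁺ʲx, y)`; after these expansions both sides are the same linear combination of
pairings `Ω(Rᵏu, v)` and their derivatives.
-/

/-- A 1-form: an `F`-linear map `X → F`. -/
def OneForm {F X : Type*} [CommRing F] [AddCommGroup X] [Module F X]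
    (ξ : X → F) : Prop :=
  (∀ y z : X, ξ (y + z) = ξ y + ξ z) ∧ ∀ (a : F) (y : X), ξ (a • y) = a * ξ y

/-- The Lie derivative of a 1-form: `(L_xζ)(y) = x(ζ(y)) − ζ([x,y])`. -/
def lieDeriv1 {F X : Type*} [Ring F] [LieRing X] (ρ : X → F → F)
    (x : X) (ζ : X → F) : X → F :=
  fun y => ρ x (ζ y) - ζ ⁅x, y⁆

/-- The Chevalley–Eilenberg differential of a 2-form. -/
def ceDiff2 {F X : Type*} [Ring F] [LieRing X]
    (ρ : X → F → F) (Ω : X → X → F) : X → X → X → F :=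
  fun x y z =>
    ρ x (Ω y z) - ρ y (Ω x z) + ρ z (Ω x y)
    - Ω ⁅x, y⁆ z + Ω ⁅x, z⁆ y - Ω ⁅y, z⁆ x

def nijenhuisTorsion {F X : Type*} [Ring F] [LieRing X] [Module F X] (R : Module.End F X)
    (x y : X) : X :=
  ⁅R x, R y⁆ - R ⁅R x, y⁆ - R ⁅x, R y⁆ + R (R ⁅x, y⁆)

def IsHereditary {F X : Type*} [Ring F] [LieRing X] [Module F X] (R : Module.End F X) : Prop :=
  ∀ x y : X, nijenhuisTorsion R x y = 0

theorem LinearMap.IsAdjointPair.pow {R M M₃ : Type*} [CommSemiring R] [AddCommMonoid M]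
    [Module R M] [AddCommMonoid M₃] [Module R M₃] {I : R →+* R} {B : M →ₗ[R] M →ₛₗ[I] M₃}
    {f g : Module.End R M} (h : IsAdjointPair B B f g) (k : ℕ) :
    IsAdjointPair B B ⇑(f ^ k) ⇑(g ^ k) := by
  induction k with
  | zero => exact isAdjointPair_one
  | succ k ih => rw [pow_succ, pow_succ']; exact ih.mul h

section

variable {F X : Type*}

theorem Module.End.apply_pow_apply [Semiring F] [AddCommMonoid X] [Module F X]
    (R : Module.End F X) (k : ℕ) (x : X) : R ((R ^ k) x) = (R ^ (k + 1)) x := by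
  rw [pow_succ', Module.End.mul_apply]

theorem Module.End.pow_apply_pow_apply [Semiring F] [AddCommMonoid X] [Module F X]
    (R : Module.End F X) (i j : ℕ) (x : X) : (R ^ i) ((R ^ j) x) = (R ^ (i + j)) x := by
  rw [pow_add, Module.End.mul_apply]

namespace IsHereditary

variable [Ring F] [LieRing X] [Module F X] {R : Module.End F X}

theorem lie_apply (hR : IsHereditary R) (x y : X) :
    ⁅R x, R y⁆ = R ⁅R x, y⁆ + R ⁅x, R y⁆ - R (R ⁅x, y⁆) := by
  rw [← sub_eq_zero, ← hR x y, nijenhuisTorsion]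
  abel

theorem lie_apply_pow_apply (hR : IsHereditary R) (j : ℕ) (x y : X) :
    ⁅R x, (R ^ j) y⁆ = R ⁅x, (R ^ j) y⁆ + (R ^ j) ⁅R x, y⁆ - (R ^ (j + 1)) ⁅x, y⁆ := by
  induction j with
  | zero => simp
  | succ j ih =>
    rw [← R.apply_pow_apply j y, hR.lie_apply, ih]
    simp only [map_add, map_sub, R.apply_pow_apply]
    abel

theorem lie_pow_apply_pow_apply (hR : IsHereditary R) (i j : ℕ) (x y : X) :
    ⁅(R ^ i) x, (R ^ j) y⁆ =
      (R ^ i) ⁅x, (R ^ j) y⁆ + (R ^ j) ⁅(R ^ i) x, y⁆ - (R ^ (i + j)) ⁅x, y⁆ := by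
  induction i with
  | zero => simp
  | succ i ih =>
    rw [← R.apply_pow_apply i x, hR.lie_apply_pow_apply, ih]
    simp only [map_add, map_sub, R.apply_pow_apply, Nat.add_right_comm i 1 j]
    abel

end IsHereditary

end

section

variable {F X : Type*} [CommRing F] [LieRing X] [Module F X] {ρ : X → F → F}

theorem oneForm_lieDeriv1 (hρadd : ∀ (x : X) (a b : F), ρ x (a + b) = ρ x a + ρ x b)
    (hρderiv : ∀ (x : X) (a b : F), ρ x (a * b) = ρ x a * b + a * ρ x b)
    (hlie_smul : ∀ (x : X) (a : F) (y : X), ⁅x, a • y⁆ = a • ⁅x, y⁆ + ρ x a • y)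
    {θ : X → F} (hθ : OneForm θ) (x : X) : OneForm (lieDeriv1 ρ x θ) := by
  obtain ⟨hadd, hsmul⟩ := hθ
  constructor
  · intro y z
    simp only [lieDeriv1, lie_add, hadd, hρadd]
    ring
  · intro a y
    simp only [lieDeriv1, hlie_smul, hadd, hsmul, hρderiv]
    ring

variable {R : Module.End F X} {Ω : X →ₗ[F] X →ₗ[F] F}

theorem OneForm.apply_pow_H_lieDeriv1 {H₀ : (X → F) → X} (hΩ : Ω.IsAlt)
    (hRΩ : Ω.IsAdjointPair Ω R R) (hH : ∀ ξ : X → F, OneForm ξ → ∀ y : X, Ω (H₀ ξ) y = ξ y)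
    {α γ : X → F} (hα : OneForm α) (hγ : OneForm γ) {v : X} (hL : OneForm (lieDeriv1 ρ v γ))
    (i : ℕ) :
    α ((R ^ i) (H₀ (lieDeriv1 ρ v γ))) =
      Ω (H₀ γ) ⁅v, (R ^ i) (H₀ α)⁆ - ρ v (Ω (H₀ γ) ((R ^ i) (H₀ α))) := by
  rw [← hH α hα, ← hRΩ.pow i, ← hΩ.neg, hH _ hL, lieDeriv1, hH γ hγ, hH γ hγ]
  ring

theorem cyclic_sum_eq_ceDiff2 (hρadd : ∀ (x : X) (a b : F), ρ x (a + b) = ρ x a + ρ x b)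
    (hR : IsHereditary R) (hΩ : Ω.IsAlt) (hRΩ : Ω.IsAdjointPair Ω R R) (m n : ℕ) (a b c : X) :
    Ω c ⁅(R ^ n) b, (R ^ m) a⁆ - ρ ((R ^ n) b) (Ω c ((R ^ m) a))
      + (Ω c ⁅(R ^ m) b, (R ^ n) a⁆ - ρ ((R ^ m) b) (Ω c ((R ^ n) a)))
      + (Ω a ⁅(R ^ n) c, (R ^ m) b⁆ - ρ ((R ^ n) c) (Ω a ((R ^ m) b)))
      + (Ω a ⁅(R ^ m) c, (R ^ n) b⁆ - ρ ((R ^ m) c) (Ω a ((R ^ n) b)))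
      + (Ω b ⁅(R ^ n) a, (R ^ m) c⁆ - ρ ((R ^ n) a) (Ω b ((R ^ m) c)))
      + (Ω b ⁅(R ^ m) a, (R ^ n) c⁆ - ρ ((R ^ m) a) (Ω b ((R ^ n) c)))
      = 4 * ceDiff2 ρ (fun x y => Ω ((R ^ (m + n)) x) y) a b c
        - (ceDiff2 ρ (fun x y => Ω ((R ^ m) x) y) ((R ^ n) a) b c
           + ceDiff2 ρ (fun x y => Ω ((R ^ n) x) y) ((R ^ m) a) b c
           + ceDiff2 ρ (fun x y => Ω ((R ^ m) x) y) ((R ^ n) b) c a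
           + ceDiff2 ρ (fun x y => Ω ((R ^ n) x) y) ((R ^ m) b) c a
           + ceDiff2 ρ (fun x y => Ω ((R ^ m) x) y) ((R ^ n) c) a b
           + ceDiff2 ρ (fun x y => Ω ((R ^ n) x) y) ((R ^ m) c) a b) := by
  have ρ_neg (x : X) (u : F) : ρ x (-u) = -ρ x u := map_neg (AddMonoidHom.mk' (ρ x) (hρadd x)) u
  have pow_pow (i j : ℕ) (x y : X) : Ω ((R ^ i) x) ((R ^ j) y) = Ω ((R ^ (i + j)) x) y := by
    rw [hRΩ.pow i, R.pow_apply_pow_apply, ← hRΩ.pow]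
  have skew_pow (k : ℕ) (x y : X) : Ω x ((R ^ k) y) = -Ω ((R ^ k) y) x := (hΩ.neg _ _).symm
  have swap (x y : X) (k : ℕ) : Ω ((R ^ k) y) x = -Ω ((R ^ k) x) y := by
    rw [hRΩ.pow, ← hΩ.neg]
  -- `skew_pow` would loop on `Ω (Rⁱ x) (Rʲ y)`, so those pairings are merged in a first pass; the
  -- second pass moves every power of `R` into the first slot of `Ω` and orders the remaining
  -- arguments of `Ω` and of brackets as `a, b, c`.
  simp only [ceDiff2, hR.lie_pow_apply_pow_apply, R.pow_apply_pow_apply, map_add, map_sub,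
    pow_pow, Nat.add_comm n m]
  simp only [skew_pow, ← lie_skew _ ((R ^ _) _), ← lie_skew b a, ← lie_skew c b, ← lie_skew c a,
    swap a b, swap a c, swap b c, ρ_neg, map_neg, LinearMap.neg_apply]
  ring

end

theorem schouten_bracket_formula_general
    {F X : Type*} [CommRing F] [LieRing X] [Module F X]
    (ρ : X → F → F)
    (hρadd : ∀ (x : X) (a b : F), ρ x (a + b) = ρ x a + ρ x b)
    (hρderiv : ∀ (x : X) (a b : F), ρ x (a * b) = ρ x a * b + a * ρ x b)
    (hlie_smul : ∀ (x : X) (a : F) (y : X),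
      ⁅x, a • y⁆ = a • ⁅x, y⁆ + ρ x a • y)
    (R : X →ₗ[F] X)
    (hR : ∀ x y : X,
      ⁅R x, R y⁆ - R ⁅R x, y⁆ - R ⁅x, R y⁆ + R (R ⁅x, y⁆) = 0)
    (Ω : X →ₗ[F] X →ₗ[F] F)
    (halt : ∀ x : X, Ω x x = 0)
    (hcompat : ∀ x y : X, Ω (R x) y = Ω x (R y))
    (H₀ : (X → F) → X)
    (hH : ∀ ξ : X → F, OneForm ξ → ∀ y : X, Ω (H₀ ξ) y = ξ y) :
    ∀ (m n : ℕ) (ξ η ζ : X → F),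
      OneForm ξ → OneForm η → OneForm ζ →
      ξ ((R ^ m) (H₀ (lieDeriv1 ρ ((R ^ n) (H₀ η)) ζ)))
      + ξ ((R ^ n) (H₀ (lieDeriv1 ρ ((R ^ m) (H₀ η)) ζ)))
      + η ((R ^ m) (H₀ (lieDeriv1 ρ ((R ^ n) (H₀ ζ)) ξ)))
      + η ((R ^ n) (H₀ (lieDeriv1 ρ ((R ^ m) (H₀ ζ)) ξ)))
      + ζ ((R ^ m) (H₀ (lieDeriv1 ρ ((R ^ n) (H₀ ξ)) η)))
      + ζ ((R ^ n) (H₀ (lieDeriv1 ρ ((R ^ m) (H₀ ξ)) η)))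
      = 4 * ceDiff2 ρ (fun a b => Ω ((R ^ (m + n)) a) b)
            (H₀ ξ) (H₀ η) (H₀ ζ)
        - (ceDiff2 ρ (fun a b => Ω ((R ^ m) a) b)
              ((R ^ n) (H₀ ξ)) (H₀ η) (H₀ ζ)
           + ceDiff2 ρ (fun a b => Ω ((R ^ n) a) b)
              ((R ^ m) (H₀ ξ)) (H₀ η) (H₀ ζ)
           + ceDiff2 ρ (fun a b => Ω ((R ^ m) a) b)
              ((R ^ n) (H₀ η)) (H₀ ζ) (H₀ ξ)
           + ceDiff2 ρ (fun a b => Ω ((R ^ n) a) b)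
              ((R ^ m) (H₀ η)) (H₀ ζ) (H₀ ξ)
           + ceDiff2 ρ (fun a b => Ω ((R ^ m) a) b)
              ((R ^ n) (H₀ ζ)) (H₀ ξ) (H₀ η)
           + ceDiff2 ρ (fun a b => Ω ((R ^ n) a) b)
              ((R ^ m) (H₀ ζ)) (H₀ ξ) (H₀ η)) := by
  intro m n ξ η ζ hξ hη hζ
  have pairing {α γ : X → F} (hα : OneForm α) (hγ : OneForm γ) (v : X) (i : ℕ) :=
    OneForm.apply_pow_H_lieDeriv1 halt hcompat hH hα hγ
      (oneForm_lieDeriv1 hρadd hρderiv hlie_smul hγ v) i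
  rw [pairing hξ hζ, pairing hξ hζ, pairing hη hξ, pairing hη hξ, pairing hζ hη, pairing hζ hη]
  exact cyclic_sum_eq_ceDiff2 hρadd hR halt hcompat m n (H₀ ξ) (H₀ η) (H₀ ζ)

/-- Schouten bracket formula: for `R` hereditary, `Ω₀` compatible with `R`,
`H₀` the inverse of `x ↦ i_xΩ₀`, `Hₙ = RⁿH₀`, `Ωₙ = Ω₀∘Rⁿ`:
`[Hₘ,Hₙ](ξ,η,ζ) = 4 dΩ_{m+n}(H₀ξ,H₀η,H₀ζ)
  − {dΩₘ(Hₙξ,H₀η,H₀ζ) + dΩₙ(Hₘξ,H₀η,H₀ζ) + cyclic(ξ,η,ζ)}`. -/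
theorem schouten_bracket_formula
    {F X : Type*} [CommRing F] [Algebra ℝ F] [LieRing X] [LieAlgebra ℝ X]
    [Module F X]
    (ρ : X → F → F)
    (hρadd : ∀ (x : X) (a b : F), ρ x (a + b) = ρ x a + ρ x b)
    (hρderiv : ∀ (x : X) (a b : F), ρ x (a * b) = ρ x a * b + a * ρ x b)
    (hρlie : ∀ (x y : X) (a : F), ρ ⁅x, y⁆ a = ρ x (ρ y a) - ρ y (ρ x a))
    (hρaddX : ∀ (x y : X) (a : F), ρ (x + y) a = ρ x a + ρ y a)
    (hρsmulX : ∀ (a : F) (x : X) (b : F), ρ (a • x) b = a * ρ x b)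
    (hlie_smul : ∀ (x : X) (a : F) (y : X),
      ⁅x, a • y⁆ = a • ⁅x, y⁆ + ρ x a • y)
    (R : X →ₗ[F] X)
    (hR : ∀ x y : X,
      ⁅R x, R y⁆ - R ⁅R x, y⁆ - R ⁅x, R y⁆ + R (R ⁅x, y⁆) = 0)
    (Ω : X →ₗ[F] X →ₗ[F] F)
    (halt : ∀ x : X, Ω x x = 0)
    (hcompat : ∀ x y : X, Ω (R x) y = Ω x (R y))
    (H₀ : (X → F) → X)
    (hH : ∀ ξ : X → F, OneForm ξ → ∀ y : X, Ω (H₀ ξ) y = ξ y)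
    (hinv : ∀ ξ : X → F, OneForm ξ → ∃! x : X, ∀ y : X, Ω x y = ξ y) :
    ∀ (m n : ℕ) (ξ η ζ : X → F),
      OneForm ξ → OneForm η → OneForm ζ →
      ξ ((R ^ m) (H₀ (lieDeriv1 ρ ((R ^ n) (H₀ η)) ζ)))
      + ξ ((R ^ n) (H₀ (lieDeriv1 ρ ((R ^ m) (H₀ η)) ζ)))
      + η ((R ^ m) (H₀ (lieDeriv1 ρ ((R ^ n) (H₀ ζ)) ξ)))
      + η ((R ^ n) (H₀ (lieDeriv1 ρ ((R ^ m) (H₀ ζ)) ξ)))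
      + ζ ((R ^ m) (H₀ (lieDeriv1 ρ ((R ^ n) (H₀ ξ)) η)))
      + ζ ((R ^ n) (H₀ (lieDeriv1 ρ ((R ^ m) (H₀ ξ)) η)))
      = 4 * ceDiff2 ρ (fun a b => Ω ((R ^ (m + n)) a) b)
            (H₀ ξ) (H₀ η) (H₀ ζ)
        - (ceDiff2 ρ (fun a b => Ω ((R ^ m) a) b)
              ((R ^ n) (H₀ ξ)) (H₀ η) (H₀ ζ)
           + ceDiff2 ρ (fun a b => Ω ((R ^ n) a) b)
              ((R ^ m) (H₀ ξ)) (H₀ η) (H₀ ζ)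
           + ceDiff2 ρ (fun a b => Ω ((R ^ m) a) b)
              ((R ^ n) (H₀ η)) (H₀ ζ) (H₀ ξ)
           + ceDiff2 ρ (fun a b => Ω ((R ^ n) a) b)
              ((R ^ m) (H₀ η)) (H₀ ζ) (H₀ ξ)
           + ceDiff2 ρ (fun a b => Ω ((R ^ m) a) b)
              ((R ^ n) (H₀ ζ)) (H₀ ξ) (H₀ η)
           + ceDiff2 ρ (fun a b => Ω ((R ^ n) a) b)
              ((R ^ m) (H₀ ζ)) (H₀ ξ) (H₀ η)) :=
  schouten_bracket_formula_general ρ hρadd hρderiv hlie_smul R hR Ω halt hcompat H₀ hH
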